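/- arXiv:math/0609703 — 6 statements merged into one kernel-verified Lean document; each statement's English description precedes it below -/
import Mathlib

section
/- Let A be a unital algebra of bounded operators on a Hilbert space H, D a self-adjoint operator on H, and h = h* ∈ A. Set D' = e^h D e^h and σ(a) = e^{2h} a e^{-2h}. If [D, b] is bounded for every b ∈ A, then for every a ∈ A the twisted commutator D' a − σ(a) D' is bounded; in fact D' a − σ(a) D' = e^h [D, b] e^h where b = e^h a e^{-h}. -/
open NormedSpace
open scoped InnerProductSpace

/-! Writing `e = exp h` and `f = exp (-h)`, we have `f * e = 1`, `σ(a) = e e a f f` and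
`D' = e D e`, so the identity `D' a - σ(a) D' = e [D, e a f] e` is pure ring algebra.
Boundedness follows because `b = e a f` lies in the closure of `A`, which contains the
exponentials of elements of `A` as limits of their power series. -/

theorem twisted_commutator_eq_sandwich_commutator {R : Type*} [Ring R] {e f : R} (hfe : f * e = 1)
    (D a : R) :
    e * D * e * a - e * e * a * (f * f) * (e * D * e)
      = e * (D * (e * a * f) - e * a * f * D) * e := by
  have hfe' (x : R) : f * (e * x) = x := by rw [← mul_assoc, hfe, one_mul]
  simp only [mul_sub, sub_mul, mul_assoc, hfe', hfe, mul_one]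

section
variable {𝔸 : Type*} [NormedRing 𝔸] [NormedAlgebra ℚ 𝔸] [CompleteSpace 𝔸]

theorem exp_neg_mul_exp_self (x : 𝔸) : exp (-x) * exp x = 1 := by
  rw [← exp_add_of_commute (Commute.refl x).neg_left, neg_add_cancel, exp_zero]

theorem exp_add_self (x : 𝔸) : exp (x + x) = exp x * exp x :=
  exp_add_of_commute (Commute.refl x)
end

theorem perturbed_triple_twisted_commutator_general {H : Type*} [NormedAddCommGroup H]
    [InnerProductSpace ℂ H] [CompleteSpace H]
    (A : StarSubalgebra ℂ (H →L[ℂ] H)) (D : H →ₗ[ℂ] H)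
    (h : H →L[ℂ] H) (hhA : h ∈ A)
    (hbd : ∀ b : H →L[ℂ] H, b ∈ A.topologicalClosure →
      ∃ C : H →L[ℂ] H, (C : H →ₗ[ℂ] H)
        = D ∘ₗ (b : H →ₗ[ℂ] H) - (b : H →ₗ[ℂ] H) ∘ₗ D)
    (a : H →L[ℂ] H) (ha : a ∈ A)
    (D' : H →ₗ[ℂ] H)
    (hD' : D' = ((exp h : H →L[ℂ] H) : H →ₗ[ℂ] H) ∘ₗ D ∘ₗ
        ((exp h : H →L[ℂ] H) : H →ₗ[ℂ] H))
    (σa b : H →L[ℂ] H)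
    (hσa : σa = exp ((2 : ℂ) • h) * a * exp (-((2 : ℂ) • h)))
    (hb : b = exp h * a * exp (-h)) :
    D' ∘ₗ (a : H →ₗ[ℂ] H) - (σa : H →ₗ[ℂ] H) ∘ₗ D'
        = ((exp h : H →L[ℂ] H) : H →ₗ[ℂ] H) ∘ₗ
            (D ∘ₗ (b : H →ₗ[ℂ] H) - (b : H →ₗ[ℂ] H) ∘ₗ D) ∘ₗ
            ((exp h : H →L[ℂ] H) : H →ₗ[ℂ] H)
      ∧ ∃ C : H →L[ℂ] H, (C : H →ₗ[ℂ] H)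
          = D' ∘ₗ (a : H →ₗ[ℂ] H) - (σa : H →ₗ[ℂ] H) ∘ₗ D' := by
  -- the ℚ-algebra structure is what the general `exp` lemmas are stated for
  let _ : NormedAlgebra ℚ (H →L[ℂ] H) := .restrictScalars ℚ ℂ _
  have hb_mem : b ∈ A.topologicalClosure := hb ▸
    mul_mem (mul_mem (exp_mem A.isClosed_topologicalClosure (A.le_topologicalClosure hhA))
      (A.le_topologicalClosure ha))
      (exp_mem A.isClosed_topologicalClosure (A.le_topologicalClosure (neg_mem hhA)))
  obtain ⟨C, hC⟩ := hbd b hb_mem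
  have hfe : ((exp (-h) : H →L[ℂ] H) : H →ₗ[ℂ] H) * exp h = 1 := by
    rw [← ContinuousLinearMap.toLinearMap_mul, exp_neg_mul_exp_self]; rfl
  have key : D' ∘ₗ (a : H →ₗ[ℂ] H) - (σa : H →ₗ[ℂ] H) ∘ₗ D'
      = ((exp h : H →L[ℂ] H) : H →ₗ[ℂ] H) ∘ₗ
          (D ∘ₗ (b : H →ₗ[ℂ] H) - (b : H →ₗ[ℂ] H) ∘ₗ D) ∘ₗ
          ((exp h : H →L[ℂ] H) : H →ₗ[ℂ] H) := by
    subst hD' hσa hb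
    rw [two_smul, neg_add, exp_add_self, exp_add_self]
    simp only [← Module.End.mul_eq_comp, ContinuousLinearMap.toLinearMap_mul]
    exact twisted_commutator_eq_sandwich_commutator hfe D a
  refine ⟨key, exp h * C * exp h, ?_⟩
  rw [key, ← hC]
  simp only [ContinuousLinearMap.toLinearMap_mul, Module.End.mul_eq_comp, LinearMap.comp_assoc]

/-- for a unital *-algebra `A` of bounded operators on a Hilbert
space `H`, a self-adjoint (possibly unbounded, everywhere defined) operator `D`
all of whose commutators with elements of (the closure of) `A` are bounded, and
a self-adjoint `h ∈ A`, setting `D' = e^h D e^h` and `σ(a) = e^{2h} a e^{-2h}`,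
the twisted commutator `D' a − σ(a) D'` equals `e^h [D, b] e^h` with
`b = e^h a e^{-h}`, and in particular it is bounded for every `a ∈ A`. -/
theorem perturbed_triple_twisted_commutator {H : Type*} [NormedAddCommGroup H]
    [InnerProductSpace ℂ H] [CompleteSpace H]
    (A : StarSubalgebra ℂ (H →L[ℂ] H)) (D : H →ₗ[ℂ] H)
    (hsym : ∀ x y : H, ⟪D x, y⟫_ℂ = ⟪x, D y⟫_ℂ)
    (h : H →L[ℂ] H) (hhA : h ∈ A) (hsa : IsSelfAdjoint h)
    (hbd : ∀ b : H →L[ℂ] H, b ∈ A.topologicalClosure →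
      ∃ C : H →L[ℂ] H, (C : H →ₗ[ℂ] H)
        = D ∘ₗ (b : H →ₗ[ℂ] H) - (b : H →ₗ[ℂ] H) ∘ₗ D)
    (a : H →L[ℂ] H) (ha : a ∈ A)
    (D' : H →ₗ[ℂ] H)
    (hD' : D' = ((exp h : H →L[ℂ] H) : H →ₗ[ℂ] H) ∘ₗ D ∘ₗ
        ((exp h : H →L[ℂ] H) : H →ₗ[ℂ] H))
    (σa b : H →L[ℂ] H)
    (hσa : σa = exp ((2 : ℂ) • h) * a * exp (-((2 : ℂ) • h)))
    (hb : b = exp h * a * exp (-h)) :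
    D' ∘ₗ (a : H →ₗ[ℂ] H) - (σa : H →ₗ[ℂ] H) ∘ₗ D'
        = ((exp h : H →L[ℂ] H) : H →ₗ[ℂ] H) ∘ₗ
            (D ∘ₗ (b : H →ₗ[ℂ] H) - (b : H →ₗ[ℂ] H) ∘ₗ D) ∘ₗ
            ((exp h : H →L[ℂ] H) : H →ₗ[ℂ] H)
      ∧ ∃ C : H →L[ℂ] H, (C : H →ₗ[ℂ] H)
          = D' ∘ₗ (a : H →ₗ[ℂ] H) - (σa : H →ₗ[ℂ] H) ∘ₗ D' :=
  perturbed_triple_twisted_commutator_general A D h hhA hbd a ha D' hD' σa b hσa hb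
end

section
/- In the crossed product algebra A = C^∞(S^1) ⋊ Γ represented on L²(S^1) by (π(g U*_φ)ξ)(x) = g(x) φ'(x)^{1/2} ξ(φ(x)), with D = (1/i)d/dx and σ(g U*_φ) = φ' · g U*_φ, for any a = g U*_φ the twisted commutator D∘π(a) − π(σ(a))∘D acts on smooth ξ by (D π(a) ξ − π(σ(a)) D ξ)(x) = (1/i)(d/dx)(g(x)φ'(x)^{1/2}) · φ'(x)^{-1/2} · (π(U*_φ)ξ)(x); in particular it is a bounded operator. -/
open Function Bornology
open scoped ContDiff


/-- for the crossed product `A = C^∞(S¹) ⋊ Γ` represented on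
`L²(S¹)` by `(π(g U*_φ)ξ)(x) = g(x) φ'(x)^{1/2} ξ(φ(x))`, with
`D = (1/i) d/dx` and `σ(g U*_φ) = φ'·g U*_φ`, for `a = g U*_φ` the twisted
commutator `D ∘ π(a) − π(σ(a)) ∘ D` acts on smooth `ξ` by multiplication by the
bounded function `(1/i)(g φ'^{1/2})' φ'^{-1/2}` followed by `π(U*_φ)`; in
particular it is a bounded operator.  (Here `S¹ = ℝ/ℤ` is modelled by
1-periodic functions on `ℝ`, and `φ` is an orientation-preserving
diffeomorphism of the circle, lifted so that `φ(x+1) = φ(x)+1`.) -/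
theorem transverse_twisted_commutator (φ : ℝ → ℝ) (g ξ : ℝ → ℂ)
    (hφ : ContDiff ℝ (⊤ : ℕ∞) φ) (hφ' : ∀ x, 0 < deriv φ x)
    (hφper : ∀ x, φ (x + 1) = φ x + 1)
    (hg : ContDiff ℝ (⊤ : ℕ∞) g) (hgper : ∀ x, g (x + 1) = g x)
    (hξ : ContDiff ℝ (⊤ : ℕ∞) ξ) :
    (∀ x : ℝ,
      -- `(D π(a) ξ)(x) − (π(σ(a)) D ξ)(x)`
      Complex.I⁻¹ * deriv (fun y => g y * Complex.ofReal (Real.sqrt (deriv φ y)) * ξ (φ y)) x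
        - Complex.ofReal (deriv φ x) * g x * Complex.ofReal (Real.sqrt (deriv φ x))
            * (Complex.I⁻¹ * deriv ξ (φ x))
      -- `= (1/i)(g φ'^{1/2})'(x) · φ'(x)^{-1/2} · (π(U*_φ)ξ)(x)`
      = Complex.I⁻¹ * deriv (fun y => g y * Complex.ofReal (Real.sqrt (deriv φ y))) x
          * Complex.ofReal (Real.sqrt (deriv φ x))⁻¹
          * (Complex.ofReal (Real.sqrt (deriv φ x)) * ξ (φ x)))
    ∧ ∃ C : ℝ, ∀ x : ℝ,
        ‖Complex.I⁻¹ * deriv (fun y => g y * Complex.ofReal (Real.sqrt (deriv φ y))) x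
            * Complex.ofReal (Real.sqrt (deriv φ x))⁻¹‖ ≤ C := by
  -- basic smoothness facts
  have hφ1 : ContDiff ℝ ∞ (deriv φ) := (contDiff_infty_iff_deriv.mp (hφ.of_le (by simp))).2
  -- `h = g · √(φ')` is smooth
  set h : ℝ → ℂ := fun y => g y * Complex.ofReal (Real.sqrt (deriv φ y)) with hh_def
  have hs : ContDiff ℝ ∞ fun y => Real.sqrt (deriv φ y) := by
    rw [contDiff_iff_contDiffAt]
    intro x
    exact (Real.contDiffAt_sqrt (hφ' x).ne').comp x (hφ1.contDiffAt)
  have hhC : ContDiff ℝ ∞ h :=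
    (hg.of_le (by simp)).mul (Complex.ofRealCLM.contDiff.comp hs)
  have hsne : ∀ x, (Real.sqrt (deriv φ x) : ℂ) ≠ 0 := fun x => by
    exact_mod_cast (Real.sqrt_pos.mpr (hφ' x)).ne'
  constructor
  · intro x
    -- derivative of the product
    have hhx : HasDerivAt h (deriv h x) x :=
      ((hhC.differentiable (by norm_num)) x).hasDerivAt
    have hξφ : HasDerivAt (fun y => ξ (φ y)) ((deriv φ x) • deriv ξ (φ x)) x :=
      ((hξ.differentiable (by simp)) (φ x)).hasDerivAt.scomp x
        ((hφ.differentiable (by simp)) x).hasDerivAt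
    have hprod : deriv (fun y => h y * ξ (φ y)) x
        = deriv h x * ξ (φ x) + h x * ((deriv φ x) • deriv ξ (φ x)) :=
      (hhx.mul hξφ).deriv
    have : deriv (fun y => g y * Complex.ofReal (Real.sqrt (deriv φ y)) * ξ (φ y)) x
        = deriv h x * ξ (φ x) + h x * ((deriv φ x) • deriv ξ (φ x)) := hprod
    rw [this, hh_def]
    simp only [Complex.real_smul, Complex.ofReal_inv]
    field_simp [hsne x]
    ring
  · -- boundedness: continuous and 1-periodic
    set F : ℝ → ℂ := fun x =>
      Complex.I⁻¹ * deriv h x * Complex.ofReal (Real.sqrt (deriv φ x))⁻¹ with hF_def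
    have hFcont : Continuous F := by
      apply (continuous_const.mul (hhC.continuous_deriv (by norm_num))).mul
      exact Complex.continuous_ofReal.comp (hs.continuous.inv₀ fun x =>
        (Real.sqrt_pos.mpr (hφ' x)).ne')
    have hφ'per : ∀ x, deriv φ (x + 1) = deriv φ x := by
      intro x
      have : deriv (fun y => φ (y + 1)) x = deriv φ (x + 1) := deriv_comp_add_const ..
      rw [← this]
      have : (fun y => φ (y + 1)) = fun y => φ y + 1 := funext hφper
      rw [this, deriv_add_const]
    have hhper : ∀ x, h (x + 1) = h x := by
      intro x; simp only [hh_def, hgper, hφ'per]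
    have hderivhper : ∀ x, deriv h (x + 1) = deriv h x := by
      intro x
      have e1 : deriv (fun y => h (y + 1)) x = deriv h (x + 1) := deriv_comp_add_const ..
      rw [← e1, funext hhper]
    have hFper : Periodic F 1 := by
      intro x; simp only [hF_def, hderivhper, hφ'per]
    obtain ⟨C, hC⟩ := isBounded_iff_forall_norm_le.mp
      (hFper.isBounded_of_continuous one_ne_zero hFcont)
    exact ⟨C, fun x => hC (F x) ⟨x, rfl⟩⟩
end

section
/- The canonical state φ(f U*_χ) = 0 for χ ≠ 1 and φ(f) = ∫_{ℝ/ℤ} f(x) dx on A = C^∞(S^1) ⋊ Γ is a σ^{-1}-trace: φ(ab) = φ(b σ^{-1}(a)) for all a, b ∈ A, where σ(g U*_χ) = χ'·g U*_χ. -/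
open scoped Classical

/-- the canonical state `φ(f U*_χ) = 0` for `χ ≠ 1`,
`φ(f) = ∫_{ℝ/ℤ} f(x) dx` on `A = C^∞(S¹) ⋊ Γ` is a `σ^{-1}`-trace:
`φ(ab) = φ(b σ^{-1}(a))`, where `σ(g U*_χ) = χ'·g U*_χ`.  It suffices to check
this on monomials `a = f U*_φ`, `b = g U*_ψ`: since
`a·b = f·(g∘φ) U*_{ψ∘φ}` and `b·σ^{-1}(a) = g·((φ')^{-1} f)∘ψ U*_{φ∘ψ}`, the
claim is the equality below (circle modelled by 1-periodic functions on ℝ). -/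
theorem canonical_state_sigma_trace (φ ψ : ℝ → ℝ) (f g : ℝ → ℂ)
    (hφ : ContDiff ℝ (⊤ : ℕ∞) φ) (hφ' : ∀ x, 0 < deriv φ x)
    (hφper : ∀ x, φ (x + 1) = φ x + 1) (hφbij : Function.Bijective φ)
    (hψ : ContDiff ℝ (⊤ : ℕ∞) ψ) (hψ' : ∀ x, 0 < deriv ψ x)
    (hψper : ∀ x, ψ (x + 1) = ψ x + 1) (hψbij : Function.Bijective ψ)
    (hf : ContDiff ℝ (⊤ : ℕ∞) f) (hfper : ∀ x, f (x + 1) = f x)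
    (hg : ContDiff ℝ (⊤ : ℕ∞) g) (hgper : ∀ x, g (x + 1) = g x) :
    -- `φ(a·b) = φ(b·σ^{-1}(a))`
    (if ∀ x, ψ (φ x) = x then ∫ x in (0:ℝ)..1, f x * g (φ x) else 0)
      = (if ∀ x, φ (ψ x) = x then
          ∫ x in (0:ℝ)..1, g x * (Complex.ofReal (deriv φ (ψ x)))⁻¹ * f (ψ x)
        else 0) := by
  have main : ∀ (hinv2 : ∀ x, φ (ψ x) = x),
      (∫ x in (0:ℝ)..1, f x * g (φ x))
        = ∫ x in (0:ℝ)..1, g x * (Complex.ofReal (deriv φ (ψ x)))⁻¹ * f (ψ x) := by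
    intro hinv2
    set h : ℝ → ℂ := fun y => f y * g (φ y) with hh
    have hcont : Continuous h := ((hf.continuous).mul ((hg.continuous).comp hφ.continuous))
    have hder : ∀ x, HasDerivAt ψ ((deriv φ (ψ x))⁻¹) x := fun x =>
      HasDerivAt.of_local_left_inverse hψ.continuous.continuousAt
        ((hφ.differentiable (by simp) (ψ x)).hasDerivAt) (ne_of_gt (hφ' (ψ x)))
        (Filter.Eventually.of_forall hinv2)
    have hcont' : Continuous fun x => (deriv φ (ψ x))⁻¹ := by
      have : Continuous fun x => deriv φ (ψ x) :=
        (hφ.continuous_deriv (by simp)).comp hψ.continuous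
      exact this.inv₀ fun x => ne_of_gt (hφ' (ψ x))
    have step1 : (∫ x in (0:ℝ)..1, g x * (Complex.ofReal (deriv φ (ψ x)))⁻¹ * f (ψ x))
        = ∫ x in (0:ℝ)..1, (deriv φ (ψ x))⁻¹ • (h ∘ ψ) x := by
      apply intervalIntegral.integral_congr
      intro x _
      simp only [Function.comp, hh, hinv2, Complex.real_smul, Complex.ofReal_inv]
      ring
    have step2 : (∫ x in (0:ℝ)..1, (deriv φ (ψ x))⁻¹ • (h ∘ ψ) x)
        = ∫ x in (ψ 0)..(ψ 1), h x :=
      intervalIntegral.integral_comp_smul_deriv (fun x _ => hder x)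
        hcont'.continuousOn hcont
    have hψ1 : ψ 1 = ψ 0 + 1 := by
      apply hφbij.injective
      rw [hinv2, hφper, hinv2]; norm_num
    have hper : Function.Periodic h 1 := by
      intro x
      simp only [hh, hfper, hφper, hgper]
    have step3 : (∫ x in (ψ 0)..(ψ 0 + 1), h x) = ∫ x in (0:ℝ)..(0:ℝ)+1, h x :=
      hper.intervalIntegral_add_eq (ψ 0) 0
    rw [step1, step2, hψ1, step3]
    norm_num
  by_cases h1 : ∀ x, ψ (φ x) = x
  · have h2 : ∀ x, φ (ψ x) = x := by
      intro x
      obtain ⟨y, rfl⟩ := hφbij.surjective x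
      rw [h1]
    rw [if_pos h1, if_pos h2, main h2]
  · have h2 : ¬ ∀ x, φ (ψ x) = x := by
      intro h2
      apply h1
      intro x
      obtain ⟨y, rfl⟩ := hψbij.surjective x
      rw [h2]
    rw [if_neg h1, if_neg h2]
end

section
/- Let (A, H, D) be a σ-spectral triple with D^{-1} ∈ L^{n,∞} and let Tr_ω be a Dixmier trace. Then φ(a) := Tr_ω(a D^{-n}) is a σ^{-n}-trace on A: φ(ab) = φ(b σ^{-n}(a)) for all a, b ∈ A. More generally Tr_ω(T σ^{-n}(a) D^{-n}) = Tr_ω(a T D^{-n}) for every bounded operator T. -/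
set_option synthInstance.maxHeartbeats 400000

variable {H : Type*} [NormedAddCommGroup H] [InnerProductSpace ℂ H] [CompleteSpace H]

/-- The `k`-th approximation number of a bounded operator. -/
noncomputable def approxNum (k : ℕ) (T : H →L[ℂ] H) : ℝ :=
  sInf {r : ℝ | ∃ F : H →L[ℂ] H,
    LinearMap.rank (F : H →ₗ[ℂ] H) ≤ (k : Cardinal) ∧ r = ‖T - F‖}

/-- Membership in the weak Schatten ideal `L^{n,∞}`. -/
def MemWeakSchatten (n : ℕ) (T : H →L[ℂ] H) : Prop :=
  IsCompactOperator T ∧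
    ∃ C : ℝ, ∀ k : ℕ, approxNum k T ≤ C * ((k : ℝ) + 1) ^ (-(1 : ℝ) / n)

/-- Membership in `L_0^{p,∞}` (singular values `o(j^{-1/p})`); a Dixmier trace
vanishes on `L_0^{1,∞}`. -/
def MemWeakSchattenLittle (p : ℝ) (T : H →L[ℂ] H) : Prop :=
  IsCompactOperator T ∧
    Filter.Tendsto (fun j : ℕ => approxNum j T * ((j : ℝ) + 1) ^ ((1 : ℝ) / p))
      Filter.atTop (nhds 0)

/-! The approximation numbers satisfy `s_{j+k}(S + T) ≤ s_j(S) + s_k(T)` and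
`s_{j+k}(ST) ≤ s_j(S) s_k(T)`, so polynomial decay rates of approximation numbers add under
products. Since `D⁻¹ (D b - σ(b) D) D⁻¹ = b D⁻¹ - D⁻¹ σ(b)` with `D b - σ(b) D` bounded,
induction on `m` shows that the twisted commutator `D^{-m} a - σ^{-m}(a) D^{-m}` decays like
`k^{-(m+1)/n}`. For `m = n` this exceeds the rate `k^{-1}` of `L^{1,∞}`, so the commutator lies in
`L_0^{1,∞}`, where `Tr_ω` vanishes: `Tr_ω(T σ^{-n}(a) D^{-n}) = Tr_ω(T D^{-n} a)`, and the trace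
property, applied to `T D^{-n} ∈ L^{1,∞}`, moves `a` to the front. -/

open Filter Topology

section ApproximationNumbers

variable {E : Type*} [NormedAddCommGroup E] [InnerProductSpace ℂ E]

lemma approxNum_le_norm_sub {k : ℕ} (T F : E →L[ℂ] E)
    (hF : LinearMap.rank (F : E →ₗ[ℂ] E) ≤ k) : approxNum k T ≤ ‖T - F‖ :=
  csInf_le ⟨0, by rintro r ⟨G, -, rfl⟩; exact norm_nonneg _⟩ ⟨F, hF, rfl⟩

lemma le_approxNum {k : ℕ} {T : E →L[ℂ] E} {x : ℝ}
    (h : ∀ F : E →L[ℂ] E, LinearMap.rank (F : E →ₗ[ℂ] E) ≤ k → x ≤ ‖T - F‖) :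
    x ≤ approxNum k T :=
  le_csInf ⟨‖T - 0‖, 0, by simp, rfl⟩ (by rintro r ⟨F, hF, rfl⟩; exact h F hF)

lemma approxNum_nonneg (k : ℕ) (T : E →L[ℂ] E) : 0 ≤ approxNum k T :=
  le_approxNum fun _ _ => norm_nonneg _

lemma approxNum_le_norm (k : ℕ) (T : E →L[ℂ] E) : approxNum k T ≤ ‖T‖ := by
  simpa using approxNum_le_norm_sub T 0 (by simp)

lemma approxNum_antitone (T : E →L[ℂ] E) : Antitone fun k => approxNum k T :=
  fun _ _ hjk => le_approxNum fun F hF =>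
    approxNum_le_norm_sub T F (hF.trans (by exact_mod_cast hjk))

lemma exists_rank_le_norm_sub_lt (k : ℕ) (T : E →L[ℂ] E) {ε : ℝ} (hε : 0 < ε) :
    ∃ F : E →L[ℂ] E, LinearMap.rank (F : E →ₗ[ℂ] E) ≤ k ∧ ‖T - F‖ < approxNum k T + ε := by
  by_contra! h
  linarith [le_approxNum (k := k) (T := T) h]

lemma approxNum_add_le (j k : ℕ) (S T : E →L[ℂ] E) :
    approxNum (j + k) (S + T) ≤ approxNum j S + approxNum k T := by
  refine le_of_forall_pos_le_add fun ε hε => ?_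
  obtain ⟨F, hF, hSF⟩ := exists_rank_le_norm_sub_lt j S (half_pos hε)
  obtain ⟨G, hG, hTG⟩ := exists_rank_le_norm_sub_lt k T (half_pos hε)
  have hrank : LinearMap.rank ((F + G : E →L[ℂ] E) : E →ₗ[ℂ] E) ≤ (j + k : ℕ) := by
    rw [ContinuousLinearMap.toLinearMap_add, Nat.cast_add]
    exact (LinearMap.rank_add_le _ _).trans (add_le_add hF hG)
  calc approxNum (j + k) (S + T) ≤ ‖(S - F) + (T - G)‖ := by
        convert approxNum_le_norm_sub (S + T) _ hrank using 2; abel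
    _ ≤ ‖S - F‖ + ‖T - G‖ := norm_add_le _ _
    _ ≤ approxNum j S + approxNum k T + ε := by linarith

lemma le_mul_of_forall_pos_le_add_mul_add {x a b : ℝ}
    (h : ∀ ε > 0, x ≤ (a + ε) * (b + ε)) : x ≤ a * b := by
  have hlim : Tendsto (fun ε => (a + ε) * (b + ε)) (𝓝[>] 0) (𝓝 (a * b)) := by
    have hcont : Continuous fun ε : ℝ => (a + ε) * (b + ε) := by fun_prop
    simpa using (hcont.tendsto 0).mono_left nhdsWithin_le_nhds
  exact ge_of_tendsto hlim (eventually_nhdsWithin_of_forall h)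

lemma approxNum_mul_le (j k : ℕ) (S T : E →L[ℂ] E) :
    approxNum (j + k) (S * T) ≤ approxNum j S * approxNum k T := by
  refine le_mul_of_forall_pos_le_add_mul_add fun ε hε => ?_
  obtain ⟨F, hF, hSF⟩ := exists_rank_le_norm_sub_lt j S hε
  obtain ⟨G, hG, hTG⟩ := exists_rank_le_norm_sub_lt k T hε
  -- `S T - (F T + (S - F) G) = (S - F)(T - G)`
  have hrank : LinearMap.rank ((F * T + (S - F) * G : E →L[ℂ] E) : E →ₗ[ℂ] E)
      ≤ (j + k : ℕ) := by
    rw [ContinuousLinearMap.toLinearMap_add, Nat.cast_add]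
    refine (LinearMap.rank_add_le _ _).trans (add_le_add ?_ ?_)
    · exact (LinearMap.rank_comp_le_left _ _).trans hF
    · exact (LinearMap.rank_comp_le_right _ _).trans hG
  calc approxNum (j + k) (S * T) ≤ ‖(S - F) * (T - G)‖ := by
        convert approxNum_le_norm_sub _ _ hrank using 2; noncomm_ring
    _ ≤ ‖S - F‖ * ‖T - G‖ := norm_mul_le _ _
    _ ≤ (approxNum j S + ε) * (approxNum k T + ε) :=
        mul_le_mul hSF.le hTG.le (norm_nonneg _) (by linarith [approxNum_nonneg j S])

lemma Nat.cast_div_two_add_one_rpow_neg_le (m : ℕ) {r : ℝ} (hr : 0 ≤ r) :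
    (((m / 2 : ℕ) : ℝ) + 1) ^ (-r) ≤ 2 ^ r * ((m : ℝ) + 1) ^ (-r) := by
  have hhalf : ((m : ℝ) + 1) / 2 ≤ ((m / 2 : ℕ) : ℝ) + 1 := by
    rw [div_le_iff₀ two_pos]
    exact_mod_cast (by omega : m + 1 ≤ (m / 2 + 1) * 2)
  calc (((m / 2 : ℕ) : ℝ) + 1) ^ (-r) ≤ (((m : ℝ) + 1) / 2) ^ (-r) :=
        Real.rpow_le_rpow_of_nonpos (by positivity) hhalf (neg_nonpos.2 hr)
    _ = 2 ^ r * ((m : ℝ) + 1) ^ (-r) := by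
        rw [Real.div_rpow (by positivity) zero_le_two, Real.rpow_neg zero_le_two, div_inv_eq_mul,
          mul_comm]

def ApproxNumDecay (p : ℝ) (T : E →L[ℂ] E) : Prop :=
  ∃ C : ℝ, ∀ k : ℕ, approxNum k T ≤ C * ((k : ℝ) + 1) ^ (-p)

lemma memWeakSchatten_iff (n : ℕ) (T : E →L[ℂ] E) :
    MemWeakSchatten n T ↔ IsCompactOperator T ∧ ApproxNumDecay (1 / n) T := by
  simp only [MemWeakSchatten, ApproxNumDecay, neg_div]

lemma approxNumDecay_zero (T : E →L[ℂ] E) : ApproxNumDecay 0 T :=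
  ⟨‖T‖, fun k => by simpa using approxNum_le_norm k T⟩

lemma approxNumDecay_zero_operator (p : ℝ) : ApproxNumDecay p (0 : E →L[ℂ] E) :=
  ⟨0, fun k => by simpa using approxNum_le_norm k (0 : E →L[ℂ] E)⟩

namespace ApproxNumDecay

variable {p q : ℝ} {S T : E →L[ℂ] E}

lemma exists_nonneg (h : ApproxNumDecay p T) :
    ∃ C, 0 ≤ C ∧ ∀ k : ℕ, approxNum k T ≤ C * ((k : ℝ) + 1) ^ (-p) := by
  obtain ⟨C, hC⟩ := h
  exact ⟨C, by simpa using (approxNum_nonneg 0 T).trans (hC 0), hC⟩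

lemma of_approxNum_add_self_le {C : ℝ} (hp : 0 ≤ p) (hC : 0 ≤ C)
    (h : ∀ k : ℕ, approxNum (k + k) T ≤ C * ((k : ℝ) + 1) ^ (-p)) : ApproxNumDecay p T := by
  refine ⟨C * 2 ^ p, fun m => ?_⟩
  calc approxNum m T ≤ approxNum (m / 2 + m / 2) T := approxNum_antitone T (by omega)
    _ ≤ C * (((m / 2 : ℕ) : ℝ) + 1) ^ (-p) := h _
    _ ≤ C * (2 ^ p * ((m : ℝ) + 1) ^ (-p)) :=
        mul_le_mul_of_nonneg_left (Nat.cast_div_two_add_one_rpow_neg_le m hp) hC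
    _ = C * 2 ^ p * ((m : ℝ) + 1) ^ (-p) := by ring

lemma add (hp : 0 ≤ p) (hS : ApproxNumDecay p S) (hT : ApproxNumDecay p T) :
    ApproxNumDecay p (S + T) := by
  obtain ⟨C, hC, hSC⟩ := hS.exists_nonneg
  obtain ⟨C', hC', hTC'⟩ := hT.exists_nonneg
  refine of_approxNum_add_self_le hp (add_nonneg hC hC') fun k => ?_
  exact (approxNum_add_le k k S T).trans ((add_le_add (hSC k) (hTC' k)).trans_eq (by ring))

lemma mul (hp : 0 ≤ p) (hq : 0 ≤ q) (hS : ApproxNumDecay p S) (hT : ApproxNumDecay q T) :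
    ApproxNumDecay (p + q) (S * T) := by
  obtain ⟨C, hC, hSC⟩ := hS.exists_nonneg
  obtain ⟨C', hC', hTC'⟩ := hT.exists_nonneg
  refine of_approxNum_add_self_le (add_nonneg hp hq) (mul_nonneg hC hC') fun k => ?_
  have hk : (0 : ℝ) < (k : ℝ) + 1 := by positivity
  calc approxNum (k + k) (S * T) ≤ approxNum k S * approxNum k T := approxNum_mul_le k k S T
    _ ≤ (C * ((k : ℝ) + 1) ^ (-p)) * (C' * ((k : ℝ) + 1) ^ (-q)) :=
        mul_le_mul (hSC k) (hTC' k) (approxNum_nonneg _ _) (by positivity)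
    _ = C * C' * ((k : ℝ) + 1) ^ (-(p + q)) := by
        rw [neg_add, Real.rpow_add hk]; ring

lemma mul_left (S : E →L[ℂ] E) (hp : 0 ≤ p) (hT : ApproxNumDecay p T) :
    ApproxNumDecay p (S * T) := by
  simpa using (approxNumDecay_zero S).mul le_rfl hp hT

lemma pow (hp : 0 ≤ p) (hS : ApproxNumDecay p S) (m : ℕ) : ApproxNumDecay (m * p) (S ^ m) := by
  induction m with
  | zero => simpa using approxNumDecay_zero (1 : E →L[ℂ] E)
  | succ m ih =>
    rw [pow_succ']
    convert hS.mul hp (by positivity) ih using 1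
    push_cast; ring

lemma memWeakSchattenLittle_one (hcpt : IsCompactOperator T) (hp : 1 < p)
    (h : ApproxNumDecay p T) : MemWeakSchattenLittle 1 T := by
  obtain ⟨C, hC⟩ := h
  have hbound : ∀ j : ℕ, approxNum j T * ((j : ℝ) + 1) ^ ((1 : ℝ) / 1)
      ≤ C * ((j : ℝ) + 1) ^ (1 - p) := fun j => by
    have hj : (0 : ℝ) < (j : ℝ) + 1 := by positivity
    calc approxNum j T * ((j : ℝ) + 1) ^ ((1 : ℝ) / 1)
        ≤ C * ((j : ℝ) + 1) ^ (-p) * ((j : ℝ) + 1) ^ (1 : ℝ) := by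
          rw [div_one]; exact mul_le_mul_of_nonneg_right (hC j) (by positivity)
      _ = C * ((j : ℝ) + 1) ^ (1 - p) := by
          rw [mul_assoc, ← Real.rpow_add hj, neg_add_eq_sub]
  have hlim : Tendsto (fun j : ℕ => ((j : ℝ) + 1) ^ (1 - p)) atTop (𝓝 0) := by
    have := (tendsto_rpow_neg_atTop (by linarith : 0 < p - 1)).comp
      (tendsto_atTop_add_const_right _ 1 tendsto_natCast_atTop_atTop)
    simpa [Function.comp_def] using this
  refine ⟨hcpt, squeeze_zero (fun j => mul_nonneg (approxNum_nonneg j T) (by positivity))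
    hbound ?_⟩
  simpa using hlim.const_mul C

end ApproxNumDecay

end ApproximationNumbers

lemma IsCompactOperator.pow {E : Type*} [NormedAddCommGroup E] [NormedSpace ℂ E]
    {T : E →L[ℂ] E} (hT : IsCompactOperator T) {n : ℕ} (hn : n ≠ 0) :
    IsCompactOperator (T ^ n) := by
  obtain ⟨k, rfl⟩ := Nat.exists_eq_succ_of_ne_zero hn
  rw [pow_succ']
  exact hT.comp_clm _

lemma ContinuousLinearMap.inverse_mul_mul_inverse_eq {E : Type*} [NormedAddCommGroup E]
    [NormedSpace ℂ E] {D : E →ₗ[ℂ] E} {Dinv b c T : E →L[ℂ] E}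
    (hD1 : D ∘ₗ (Dinv : E →ₗ[ℂ] E) = LinearMap.id)
    (hD2 : (Dinv : E →ₗ[ℂ] E) ∘ₗ D = LinearMap.id)
    (hT : (T : E →ₗ[ℂ] E) = D ∘ₗ (b : E →ₗ[ℂ] E) - (c : E →ₗ[ℂ] E) ∘ₗ D) :
    Dinv * T * Dinv = b * Dinv - Dinv * c := by
  ext x
  have hTx := LinearMap.congr_fun hT (Dinv x)
  have hDinvD := LinearMap.congr_fun hD2 (b (Dinv x))
  have hDDinv := LinearMap.congr_fun hD1 x
  simp only [ContinuousLinearMap.coe_coe, LinearMap.sub_apply, LinearMap.comp_apply,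
    LinearMap.id_apply] at hTx hDinvD hDDinv
  simp [hTx, hDDinv, hDinvD]

theorem approxNumDecay_pow_mul_sub_mul_pow {E : Type*} [NormedAddCommGroup E]
    [InnerProductSpace ℂ E] {A : Subalgebra ℂ (E →L[ℂ] E)} {σ : A ≃ₐ[ℂ] A}
    {D : E →ₗ[ℂ] E} {Dinv : E →L[ℂ] E}
    (hD1 : D ∘ₗ (Dinv : E →ₗ[ℂ] E) = LinearMap.id)
    (hD2 : (Dinv : E →ₗ[ℂ] E) ∘ₗ D = LinearMap.id)
    (htw : ∀ a : A, ∃ T : E →L[ℂ] E, (T : E →ₗ[ℂ] E)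
      = D ∘ₗ ((a : E →L[ℂ] E) : E →ₗ[ℂ] E)
        - (((σ a : A) : E →L[ℂ] E) : E →ₗ[ℂ] E) ∘ₗ D)
    {p : ℝ} (hp : 0 ≤ p) (hDinv : ApproxNumDecay p Dinv) (a : A) (m : ℕ) :
    ApproxNumDecay (((m : ℝ) + 1) * p)
      (Dinv ^ m * (a : E →L[ℂ] E) - (((σ⁻¹ ^ m) a : A) : E →L[ℂ] E) * Dinv ^ m) := by
  induction m with
  | zero => simpa using approxNumDecay_zero_operator p
  | succ m ih =>
    obtain ⟨T, hT⟩ := htw ((σ⁻¹ ^ (m + 1)) a)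
    have hσ : σ ((σ⁻¹ ^ (m + 1)) a) = (σ⁻¹ ^ m) a := by
      rw [← AlgEquiv.mul_apply, show σ * σ⁻¹ ^ (m + 1) = σ⁻¹ ^ m by group]
    rw [hσ] at hT
    have hcomm := ContinuousLinearMap.inverse_mul_mul_inverse_eq hD1 hD2 hT
    have hpow : ApproxNumDecay (((m : ℝ) + 1) * p) (Dinv ^ (m + 1)) := by
      exact_mod_cast hDinv.pow hp (m + 1)
    have hsplit : Dinv ^ (m + 1) * (a : E →L[ℂ] E)
        - (((σ⁻¹ ^ (m + 1)) a : A) : E →L[ℂ] E) * Dinv ^ (m + 1)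
        = Dinv * ((Dinv ^ m * (a : E →L[ℂ] E) - (((σ⁻¹ ^ m) a : A) : E →L[ℂ] E) * Dinv ^ m)
          + -T * Dinv ^ (m + 1)) := by
      have hTD : Dinv * (-T * Dinv ^ (m + 1)) = -(Dinv * T * Dinv) * Dinv ^ m := by
        rw [pow_succ']; noncomm_ring
      rw [mul_add, hTD, hcomm, pow_succ']
      noncomm_ring
    rw [hsplit]
    convert hDinv.mul hp (by positivity)
      (ih.add (by positivity) (hpow.mul_left (-T) (by positivity))) using 1
    push_cast; ring

/-- for a `σ`-spectral triple `(A, H, D)` with `D^{-1} ∈ L^{n,∞}`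
and a Dixmier trace `Tr_ω` (abstracted as a linear functional `τ` which
vanishes on `L_0^{1,∞}` and has the trace property against `L^{1,∞}`), the
functional `φ(a) = Tr_ω(a D^{-n})` is a `σ^{-n}`-trace on `A`:
`φ(ab) = φ(b σ^{-n}(a))`; more generally,
`Tr_ω(T σ^{-n}(a) D^{-n}) = Tr_ω(a T D^{-n})` for every bounded `T`. -/
theorem dixmier_sigma_trace
    (A : Subalgebra ℂ (H →L[ℂ] H)) (σ : A ≃ₐ[ℂ] A)
    (D : H →ₗ[ℂ] H) (Dinv : H →L[ℂ] H)
    (hD1 : D ∘ₗ (Dinv : H →ₗ[ℂ] H) = LinearMap.id)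
    (hD2 : (Dinv : H →ₗ[ℂ] H) ∘ₗ D = LinearMap.id)
    (htw : ∀ a : A, ∃ T : H →L[ℂ] H, (T : H →ₗ[ℂ] H)
      = D ∘ₗ ((a : H →L[ℂ] H) : H →ₗ[ℂ] H)
        - (((σ a : A) : H →L[ℂ] H) : H →ₗ[ℂ] H) ∘ₗ D)
    (n : ℕ) (hn : 0 < n) (hDn : MemWeakSchatten n Dinv)
    (τ : (H →L[ℂ] H) →ₗ[ℂ] ℂ)
    (hτ0 : ∀ T : H →L[ℂ] H, MemWeakSchattenLittle 1 T → τ T = 0)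
    (hτtr : ∀ S T : H →L[ℂ] H, MemWeakSchatten 1 T → τ (S * T) = τ (T * S)) :
    -- general form: `Tr_ω(T σ^{-n}(a) D^{-n}) = Tr_ω(a T D^{-n})`
    (∀ (a : A) (T : H →L[ℂ] H),
        τ (T * (((σ⁻¹ ^ n) a : A) : H →L[ℂ] H) * Dinv ^ n)
          = τ ((a : H →L[ℂ] H) * T * Dinv ^ n))
    -- `σ^{-n}`-trace property: `φ(ab) = φ(b σ^{-n}(a))`
    ∧ (∀ a b : A,
        τ (((a * b : A) : H →L[ℂ] H) * Dinv ^ n)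
          = τ ((b : H →L[ℂ] H) * (((σ⁻¹ ^ n) a : A) : H →L[ℂ] H) * Dinv ^ n)) := by
  obtain ⟨hDinv_cpt, hDinv⟩ := (memWeakSchatten_iff n Dinv).1 hDn
  have hp : (0 : ℝ) ≤ 1 / n := by positivity
  have hn_pos : (0 : ℝ) < n := by exact_mod_cast hn
  have hDn_cpt := hDinv_cpt.pow hn.ne'
  have hTDn : ∀ T : H →L[ℂ] H, MemWeakSchatten 1 (T * Dinv ^ n) := fun T =>
    (memWeakSchatten_iff 1 _).2 ⟨hDn_cpt.clm_comp T,
      by simpa [hn_pos.ne'] using (hDinv.pow hp n).mul_left T (by positivity)⟩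
  have main : ∀ (a : A) (T : H →L[ℂ] H),
      τ (T * (((σ⁻¹ ^ n) a : A) : H →L[ℂ] H) * Dinv ^ n)
        = τ ((a : H →L[ℂ] H) * T * Dinv ^ n) := by
    intro a T
    set R := Dinv ^ n * (a : H →L[ℂ] H) - (((σ⁻¹ ^ n) a : A) : H →L[ℂ] H) * Dinv ^ n
    have hR_cpt : IsCompactOperator R := (hDn_cpt.comp_clm _).sub (hDn_cpt.clm_comp _)
    have hR : MemWeakSchattenLittle 1 (T * R) :=
      ApproxNumDecay.memWeakSchattenLittle_one (hR_cpt.clm_comp T)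
        (by rw [add_mul, one_mul, mul_one_div_cancel hn_pos.ne']; linarith [one_div_pos.2 hn_pos])
        ((approxNumDecay_pow_mul_sub_mul_pow hD1 hD2 htw hp hDinv a n).mul_left T
          (by positivity))
    calc τ (T * (((σ⁻¹ ^ n) a : A) : H →L[ℂ] H) * Dinv ^ n)
        = τ (T * Dinv ^ n * (a : H →L[ℂ] H)) - τ (T * R) := by
          rw [← map_sub]; congr 1; simp only [R]; noncomm_ring
      _ = τ (T * Dinv ^ n * (a : H →L[ℂ] H)) := by rw [hτ0 _ hR, sub_zero]
      _ = τ ((a : H →L[ℂ] H) * T * Dinv ^ n) := by rw [← hτtr _ _ (hTDn T), mul_assoc]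
  exact ⟨main, fun a b => (main a b).symm⟩
end

section
/- Let (A, H, D, γ) be a graded σ-spectral triple with D^{-1} ∈ L^{n,∞} for even n, and suppose the functional τ(T) = Tr_ω(T D^{-n}) satisfies τ(T σ^{-n}(a)) = τ(aT) for all bounded T and a ∈ A. Then the (n+1)-linear functional Ψ(a^0,…,a^n) = τ(γ a^0 d_σ(σ^{-1}(a^1)) ⋯ d_σ(σ^{-n}(a^n))) is a Hochschild cocycle: bΨ = 0, where (bΨ)(a^0,…,a^{n+1}) = Σ_{i=0}^n (−1)^i Ψ(a^0,…,a^i a^{i+1},…,a^{n+1}) + (−1)^{n+1} Ψ(a^{n+1}a^0, a^1,…,a^n). -/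
/-- Telescoping lemma for the alternating sum in the Hochschild coboundary. -/
private lemma telescope_aux (t : ℕ → ℂ) (n : ℕ) :
    ∑ i ∈ Finset.range (n + 1), (-1 : ℂ) ^ i * (if i = 0 then t 0 else t (i - 1) + t i)
      = (-1 : ℂ) ^ n * t n := by
  induction n with
  | zero => simp
  | succ m ih =>
    rw [Finset.sum_range_succ, ih]
    simp only [Nat.succ_ne_zero, if_false, Nat.add_sub_cancel]
    ring

/-- The twisted derivation factor `d_i` built from a sequence. -/
private def derFac {B : Type*} [Ring B] [Algebra ℂ B] {A : Subalgebra ℂ B}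
    (σ : A ≃ₐ[ℂ] A) (D : B) (a : ℕ → A) (i : ℕ) : B :=
  D * (((σ⁻¹ ^ (i + 1)) (a (i + 1)) : A) : B) - (((σ⁻¹ ^ i) (a (i + 1)) : A) : B) * D

private lemma derFac_congr {B : Type*} [Ring B] [Algebra ℂ B] {A : Subalgebra ℂ B}
    (σ : A ≃ₐ[ℂ] A) (D : B) {a b : ℕ → A} {i : ℕ} (h : a (i + 1) = b (i + 1)) :
    derFac σ D a i = derFac σ D b i := by
  simp [derFac, h]

theorem hochschild_cocycle_twisted {B : Type*} [Ring B] [Algebra ℂ B]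
    (A : Subalgebra ℂ B) (σ : A ≃ₐ[ℂ] A) (γ D : B)
    (n : ℕ) (hn : Even n) (hn1 : 0 < n)
    (hγA : ∀ a : A, γ * (a : B) = (a : B) * γ)
    (hγD : D * γ = -(γ * D))
    (τ : B →ₗ[ℂ] ℂ)
    (hτ : ∀ (T : B) (a : A), τ (T * (((σ⁻¹ ^ n) a : A) : B)) = τ ((a : B) * T))
    (Ψ : (ℕ → A) → ℂ)
    (hΨ : ∀ a : ℕ → A, Ψ a = τ (γ * (a 0 : B) *
      ((List.range n).map (fun i =>
        D * (((σ⁻¹ ^ (i + 1)) (a (i + 1)) : A) : B)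
          - (((σ⁻¹ ^ i) (a (i + 1)) : A) : B) * D)).prod)) :
    ∀ a : ℕ → A,
      (∑ i ∈ Finset.range (n + 1), (-1 : ℂ) ^ i *
          Ψ (fun j => if j < i then a j else if j = i then a i * a (i + 1) else a (j + 1)))
        + (-1 : ℂ) ^ (n + 1) * Ψ (fun j => if j = 0 then a (n + 1) * a 0 else a j)
      = 0 := by
  intro a
  have hΨ' : ∀ b : ℕ → A,
      Ψ b = τ (γ * (b 0 : B) * ((List.range n).map (derFac σ D b)).prod) := fun b => hΨ b
  -- the shifted sequence
  set a' : ℕ → A := fun j => a (j + 1) with ha'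
  -- the telescoping quantities
  set X : ℕ → ℂ := fun i => τ (γ * (a 0 : B) * ((List.range i).map (derFac σ D a)).prod *
      (((σ⁻¹ ^ i) (a (i + 1)) : A) : B) *
      ((List.range (n - i)).map (fun k => derFac σ D a' (i + k))).prod) with hX
  -- each term of the sum
  have key : ∀ i ∈ Finset.range (n + 1),
      Ψ (fun j => if j < i then a j else if j = i then a i * a (i + 1) else a (j + 1))
        = if i = 0 then X 0 else X (i - 1) + X i := by
    intro i hi
    have hin : i ≤ n := Nat.lt_succ_iff.mp (Finset.mem_range.mp hi)
    match i with
    | 0 =>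
      rw [hΨ']
      simp only [if_pos rfl, hX, Nat.sub_zero, Nat.zero_add]
      have h2 : (List.range n).map
            (derFac σ D fun j => if j < 0 then a j else if j = 0 then a 0 * a (0 + 1) else a (j + 1))
          = (List.range n).map (fun k => derFac σ D a' k) := by
        refine List.map_congr_left (fun k _ => ?_)
        exact derFac_congr σ D (by simp [ha'])
      rw [h2]
      congr 1
      simp only [lt_self_iff_false, if_false, eq_self_iff_true, ite_true, pow_zero,
        AlgEquiv.one_apply, List.range_zero, List.map_nil, List.prod_nil, mul_one,
        MulMemClass.coe_mul]
      noncomm_ring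
    | (p + 1) =>
      have hpn : p + 1 ≤ n := hin
      rw [hΨ']
      simp only [Nat.succ_ne_zero, if_false, Nat.add_sub_cancel, hX]
      -- split the range
      have hsplit : List.range n
          = (List.range p ++ [p]) ++ (List.range (n - (p + 1))).map (fun k => p + 1 + k) := by
        rw [← List.range_succ, ← List.range_add]
        congr 1
        omega
      rw [hsplit]
      simp only [List.map_append, List.prod_append, List.map_map, List.map_cons, List.map_nil,
        List.prod_cons, List.prod_nil, mul_one]
      -- head factors
      have hhead : (List.range p).map
            (derFac σ D fun j =>
              if j < p + 1 then a j else if j = p + 1 then a (p + 1) * a (p + 1 + 1) else a (j + 1))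
          = (List.range p).map (derFac σ D a) := by
        refine List.map_congr_left (fun k hk => ?_)
        have hk' : k < p := List.mem_range.mp hk
        exact derFac_congr σ D (by simp only [if_pos (show k + 1 < p + 1 by omega)])
      -- tail factors
      have htail : (List.range (n - (p + 1))).map
            ((derFac σ D fun j =>
              if j < p + 1 then a j else if j = p + 1 then a (p + 1) * a (p + 1 + 1) else a (j + 1))
              ∘ fun k => p + 1 + k)
          = (List.range (n - (p + 1))).map (fun k => derFac σ D a' (p + 1 + k)) := by
        refine List.map_congr_left (fun k _ => ?_)
        show derFac σ D _ (p + 1 + k) = derFac σ D a' (p + 1 + k)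
        refine derFac_congr σ D ?_
        simp only [if_neg (show ¬ (p + 1 + k + 1 < p + 1) by omega),
          if_neg (show ¬ (p + 1 + k + 1 = p + 1) by omega), ha']
      -- the twisted Leibniz rule at position p
      have hleib : derFac σ D (fun j =>
              if j < p + 1 then a j else if j = p + 1 then a (p + 1) * a (p + 1 + 1) else a (j + 1)) p
          = derFac σ D a p * (((σ⁻¹ ^ (p + 1)) (a (p + 1 + 1)) : A) : B)
            + (((σ⁻¹ ^ p) (a (p + 1)) : A) : B) * derFac σ D a' p := by
        simp only [derFac, ha', lt_self_iff_false, if_false, eq_self_iff_true, if_true]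
        simp only [map_mul, MulMemClass.coe_mul]
        noncomm_ring
      rw [hhead, htail, hleib]
      rw [if_pos (Nat.succ_pos p)]
      -- rearrange the second summand's tail
      have hX2 : (List.range (n - p)).map (fun k => derFac σ D a' (p + k))
          = [derFac σ D a' p]
            ++ (List.range (n - (p + 1))).map (fun k => derFac σ D a' (p + 1 + k)) := by
        have he : n - p = 1 + (n - (p + 1)) := by omega
        have hfun : ∀ k, derFac σ D a' (p + (1 + k)) = derFac σ D a' (p + 1 + k) := by
          intro k
          congr 1
          omega
        rw [he, List.range_add, List.map_append, List.map_map]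
        simp only [List.range_succ, List.range_zero, List.map_cons, List.map_nil, Nat.add_zero,
          List.singleton_append]
        exact congrArg (List.cons (derFac σ D a' p))
          (List.map_congr_left fun k _ => hfun k)
      rw [hX2]
      simp only [List.prod_append, List.prod_cons, List.prod_nil, mul_one, List.range_succ,
        List.map_append, List.map_cons, List.map_nil]
      rw [← map_add]
      congr 1
      noncomm_ring
  rw [Finset.sum_congr rfl (fun i hi => by rw [key i hi]), telescope_aux]
  -- the last term
  rw [hΨ']
  simp only [if_pos rfl, hX]
  have hc : (List.range n).map (derFac σ D fun j => if j = 0 then a (n + 1) * a 0 else a j)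
      = (List.range n).map (derFac σ D a) := by
    refine List.map_congr_left fun k _ => ?_
    exact derFac_congr σ D (by simp)
  rw [hc]
  simp only [Nat.sub_self, List.range_zero, List.map_nil, List.prod_nil, mul_one,
    eq_self_iff_true, if_true]
  rw [hτ (γ * (a 0 : B) * ((List.range n).map (derFac σ D a)).prod) (a (n + 1))]
  have harg : ((a (n + 1) : A) : B) * (γ * (a 0 : B) * ((List.range n).map (derFac σ D a)).prod)
      = γ * ((a (n + 1) * a 0 : A) : B) * ((List.range n).map (derFac σ D a)).prod := by
    rw [MulMemClass.coe_mul, ← mul_assoc, ← mul_assoc, ← hγA]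
    noncomm_ring
  rw [harg]
  ring
end

section
/- Let τ be the cyclic 1-cocycle on A = C^∞(S^1) ⋊ Γ given by τ(f U*_φ, g U*_ψ) = φ(f U*_φ · d(g U*_ψ)) (the transverse fundamental class), and δ the derivation δ(f U*_φ) = i log φ' · f U*_φ. Then for ψ = φ^{-1}, the Lie derivative L_δ τ(f U*_φ, g U*_ψ) := τ(δ(f U*_φ), g U*_ψ) + τ(f U*_φ, δ(g U*_ψ)) equals −i ∫_{ℝ/ℤ} f · (g∘φ) · d log φ'. -/
open Complex

/-- for the transverse fundamental class cyclic cocycle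
`τ(f U*_φ, g U*_ψ) = φ(f U*_φ · d(g U*_ψ))` on `A = C^∞(S¹) ⋊ Γ` and the
derivation `δ(f U*_φ) = i log φ' · f U*_φ`, with `ψ = φ^{-1}` one has
`L_δτ(f U*_φ, g U*_ψ) = τ(δ(f U*_φ), g U*_ψ) + τ(f U*_φ, δ(g U*_ψ))
  = −i ∫_{ℝ/ℤ} f·(g∘φ)·d log φ'`.
Here `τ(f U*_φ, g U*_ψ) = ∫ f(x) g'(φ(x)) φ'(x) dx` for `ψ = φ^{-1}`, and the
circle is modelled by 1-periodic functions on ℝ. -/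
theorem lie_derivative_transverse_class (φ ψ : ℝ → ℝ) (f g : ℝ → ℂ)
    (hφ : ContDiff ℝ (⊤ : ℕ∞) φ) (hφ' : ∀ x, 0 < deriv φ x)
    (hφper : ∀ x, φ (x + 1) = φ x + 1)
    (hψ : ContDiff ℝ (⊤ : ℕ∞) ψ) (hψ' : ∀ x, 0 < deriv ψ x)
    (hinv1 : ∀ x, ψ (φ x) = x) (hinv2 : ∀ x, φ (ψ x) = x)
    (hf : ContDiff ℝ (⊤ : ℕ∞) f) (hfper : ∀ x, f (x + 1) = f x)
    (hg : ContDiff ℝ (⊤ : ℕ∞) g) (hgper : ∀ x, g (x + 1) = g x) :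
    -- `τ(δ(f U*_φ), g U*_ψ)`
    (∫ x in (0:ℝ)..1,
        (I * Complex.ofReal (Real.log (deriv φ x))) * f x
          * deriv g (φ x) * Complex.ofReal (deriv φ x))
      -- `+ τ(f U*_φ, δ(g U*_ψ))`
      + (∫ x in (0:ℝ)..1,
          f x * deriv (fun y => (I * Complex.ofReal (Real.log (deriv ψ y))) * g y) (φ x)
            * Complex.ofReal (deriv φ x))
      -- `= −i ∫ f·(g∘φ)·d log φ'`
      = -I * ∫ x in (0:ℝ)..1,
          f x * g (φ x) * Complex.ofReal (deriv (fun y => Real.log (deriv φ y)) x) := by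
  have hφdiff : Differentiable ℝ φ := hφ.differentiable (by simp)
  have hψdiff : Differentiable ℝ ψ := hψ.differentiable (by simp)
  have hgdiff : Differentiable ℝ g := hg.differentiable (by simp)
  have hφ2 : ContDiff ℝ (⊤:ℕ∞) (deriv φ) := (contDiff_infty_iff_deriv.mp (hφ.of_le (by simp))).2
  have hψ2 : ContDiff ℝ (⊤:ℕ∞) (deriv ψ) := (contDiff_infty_iff_deriv.mp (hψ.of_le (by simp))).2
  have hg2 : Continuous (deriv g) := ((contDiff_infty_iff_deriv.mp (hg.of_le (by simp))).2).continuous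
  have hφne : ∀ x, deriv φ x ≠ 0 := fun x => (hφ' x).ne'
  have hψne : ∀ x, deriv ψ x ≠ 0 := fun x => (hψ' x).ne'
  -- derivative of the inverse
  have hinv_deriv : ∀ x, deriv ψ (φ x) = (deriv φ x)⁻¹ := by
    intro x
    have h1 : HasDerivAt (fun y => ψ (φ y)) (deriv ψ (φ x) * deriv φ x) x :=
      (hψdiff (φ x)).hasDerivAt.comp x (hφdiff x).hasDerivAt
    have h2 : HasDerivAt (fun y => ψ (φ y)) 1 x := by
      have he : (fun y => ψ (φ y)) = id := funext hinv1
      rw [he]; exact hasDerivAt_id x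
    exact eq_inv_of_mul_eq_one_left (h1.unique h2)
  have hML : ∀ x, Real.log (deriv ψ (φ x)) = - Real.log (deriv φ x) := by
    intro x; rw [hinv_deriv, Real.log_inv]
  -- derivatives of the log-derivatives
  have hLd : ∀ x, HasDerivAt (fun y => Real.log (deriv φ y))
      ((deriv φ x)⁻¹ * deriv (deriv φ) x) x := fun x =>
    (Real.hasDerivAt_log (hφne x)).comp x (hφ2.differentiable (by simp) x).hasDerivAt
  have hMd : ∀ y, HasDerivAt (fun z => Real.log (deriv ψ z))
      ((deriv ψ y)⁻¹ * deriv (deriv ψ) y) y := fun y =>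
    (Real.hasDerivAt_log (hψne y)).comp y (hψ2.differentiable (by simp) y).hasDerivAt
  have hLval : ∀ x, deriv (fun y => Real.log (deriv φ y)) x
      = (deriv φ x)⁻¹ * deriv (deriv φ) x := fun x => (hLd x).deriv
  -- chain rule for the identity log ψ'(φ x) = - log φ'(x)
  have hchain : ∀ x, ((deriv ψ (φ x))⁻¹ * deriv (deriv ψ) (φ x)) * deriv φ x
      = - ((deriv φ x)⁻¹ * deriv (deriv φ) x) := by
    intro x
    have h1 : HasDerivAt (fun y => Real.log (deriv ψ (φ y)))
        (((deriv ψ (φ x))⁻¹ * deriv (deriv ψ) (φ x)) * deriv φ x) x :=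
      (hMd (φ x)).comp x (hφdiff x).hasDerivAt
    have h2 : HasDerivAt (fun y => Real.log (deriv ψ (φ y)))
        (-((deriv φ x)⁻¹ * deriv (deriv φ) x)) x := by
      have he : (fun y => Real.log (deriv ψ (φ y)))
          = fun y => - Real.log (deriv φ y) := funext hML
      rw [he]; exact (hLd x).neg
    exact h1.unique h2
  -- compute the inner derivative in the second integrand
  have hInner : ∀ y, deriv (fun z => (I * Complex.ofReal (Real.log (deriv ψ z))) * g z) y
      = I * Complex.ofReal ((deriv ψ y)⁻¹ * deriv (deriv ψ) y) * g y
        + (I * Complex.ofReal (Real.log (deriv ψ y))) * deriv g y := by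
    intro y
    have h1 : HasDerivAt (fun z => (I * Complex.ofReal (Real.log (deriv ψ z))))
        (I * Complex.ofReal ((deriv ψ y)⁻¹ * deriv (deriv ψ) y)) y :=
      ((hMd y).ofReal_comp).const_mul I
    exact (h1.mul (hgdiff y).hasDerivAt).deriv
  -- the pointwise identity
  have key : ∀ x,
      (I * Complex.ofReal (Real.log (deriv φ x))) * f x
          * deriv g (φ x) * Complex.ofReal (deriv φ x)
        + f x * deriv (fun y => (I * Complex.ofReal (Real.log (deriv ψ y))) * g y) (φ x)
            * Complex.ofReal (deriv φ x)
      = -I * (f x * g (φ x)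
          * Complex.ofReal (deriv (fun y => Real.log (deriv φ y)) x)) := by
    intro x
    rw [hInner (φ x), hLval x, hML x]
    have hcC : (Complex.ofReal ((deriv ψ (φ x))⁻¹ * deriv (deriv ψ) (φ x)))
        * Complex.ofReal (deriv φ x)
        = - Complex.ofReal ((deriv φ x)⁻¹ * deriv (deriv φ) x) := by
      rw [← Complex.ofReal_mul, hchain x, Complex.ofReal_neg]
    push_cast at hcC ⊢
    linear_combination I * f x * g (φ x) * hcC
  -- continuity of the integrands
  have hLc : Continuous (fun x => Real.log (deriv φ x)) := hφ2.continuous.log hφne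
  have hA : Continuous (fun x => (I * Complex.ofReal (Real.log (deriv φ x))) * f x
      * deriv g (φ x) * Complex.ofReal (deriv φ x)) := by
    exact (((continuous_const.mul (Complex.continuous_ofReal.comp hLc)).mul
      hf.continuous).mul (hg2.comp hφ.continuous)).mul
      (Complex.continuous_ofReal.comp hφ2.continuous)
  have hC : Continuous (fun x => f x * g (φ x)
      * Complex.ofReal (deriv (fun y => Real.log (deriv φ y)) x)) := by
    have he : deriv (fun y => Real.log (deriv φ y))
        = fun x => (deriv φ x)⁻¹ * deriv (deriv φ) x := funext hLval
    refine (hf.continuous.mul (hg.continuous.comp hφ.continuous)).mul ?_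
    refine Complex.continuous_ofReal.comp ?_
    rw [he]
    exact (hφ2.continuous.inv₀ hφne).mul (contDiff_infty_iff_deriv.mp hφ2).2.continuous
  have hB : Continuous (fun x =>
      f x * deriv (fun y => (I * Complex.ofReal (Real.log (deriv ψ y))) * g y) (φ x)
        * Complex.ofReal (deriv φ x)) := by
    have he : (fun x =>
        f x * deriv (fun y => (I * Complex.ofReal (Real.log (deriv ψ y))) * g y) (φ x)
          * Complex.ofReal (deriv φ x))
        = fun x => -I * (f x * g (φ x)
            * Complex.ofReal (deriv (fun y => Real.log (deriv φ y)) x))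
          - (I * Complex.ofReal (Real.log (deriv φ x))) * f x
            * deriv g (φ x) * Complex.ofReal (deriv φ x) :=
      funext fun x => eq_sub_of_add_eq' (key x)
    rw [he]
    exact (continuous_const.mul hC).sub hA
  -- combine the integrals
  rw [← intervalIntegral.integral_add (hA.intervalIntegrable 0 1) (hB.intervalIntegrable 0 1),
    ← intervalIntegral.integral_const_mul]
  exact intervalIntegral.integral_congr fun x _ => key x
end
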